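/- arXiv:1706.03120 — 3 statements merged into one kernel-verified Lean document; each statement's English description precedes it below -/
import Mathlib

section
/- For every integer e > 1, σ(e)/e ≤ exp(2ω(e)/P⁻(e)), where ω(e) is the number of distinct prime factors of e and P⁻(e) its least prime factor. -/
/-!
`σ(n)/n` is the product over the prime powers `p^k ∥ n` of `σ(p^k)/p^k < p/(p-1)`, and
`p/(p-1) ≤ 1 + 2/p ≤ exp(2/p)` for `p ≥ 2`. Each of the `ω(n)` factors is thus at most
`exp(2/P⁻(n))`.
-/

open ArithmeticFunction Finset
open scoped ArithmeticFunction.sigma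

lemma div_sub_one_le_exp_two_div {x : ℝ} (hx : 2 ≤ x) : x / (x - 1) ≤ Real.exp (2 / x) := by
  calc x / (x - 1) ≤ 2 / x + 1 := by
        rw [div_add_one (by positivity), div_le_div_iff₀ (by linarith) (by positivity)]
        nlinarith
    _ ≤ Real.exp (2 / x) := Real.add_one_le_exp _

lemma sigma_one_prime_pow_div_le {p : ℕ} (hp : p.Prime) (k : ℕ) :
    (σ 1 (p ^ k) : ℝ) / p ^ k ≤ p / (p - 1) := by
  have hp1 : (1 : ℝ) < p := by exact_mod_cast hp.one_lt
  rw [sigma_one_apply_prime_pow hp, div_le_div_iff₀ (by positivity) (by linarith)]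
  push_cast
  rw [geom_sum_eq hp1.ne', div_mul_cancel₀ _ (by linarith), pow_succ]
  nlinarith [pow_pos (by linarith : (0 : ℝ) < p) k]

lemma sigma_one_div_eq_prod {n : ℕ} (hn : n ≠ 0) :
    (σ 1 n : ℝ) / n =
      ∏ p ∈ n.primeFactors, (σ 1 (p ^ n.factorization p) : ℝ) / p ^ n.factorization p := by
  rw [prod_div_distrib]
  nth_rw 2 [Nat.prod_primeFactors_pow_factorization hn]
  rw [isMultiplicative_sigma.multiplicative_factorization _ hn,
    Nat.prod_factorization_eq_prod_primeFactors]
  push_cast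
  rfl

lemma sum_primeFactors_two_div_le (n : ℕ) :
    ∑ p ∈ n.primeFactors, (2 / p : ℝ) ≤ 2 * n.primeFactors.card / n.minFac := by
  rw [mul_div_right_comm, mul_comm, ← nsmul_eq_mul, ← sum_const]
  refine sum_le_sum fun p hp => ?_
  gcongr
  · exact_mod_cast n.minFac_pos
  · exact Nat.minFac_le_of_dvd (Nat.prime_of_mem_primeFactors hp).two_le
      (Nat.dvd_of_mem_primeFactors hp)

theorem stmt_3_general (e : ℕ) :
    (ArithmeticFunction.sigma 1 e : ℝ) / e ≤
      Real.exp (2 * e.primeFactors.card / e.minFac) := by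
  rcases eq_or_ne e 0 with rfl | he
  · simp
  calc (σ 1 e : ℝ) / e
      = ∏ p ∈ e.primeFactors, (σ 1 (p ^ e.factorization p) : ℝ) / p ^ e.factorization p :=
        sigma_one_div_eq_prod he
    _ ≤ ∏ p ∈ e.primeFactors, Real.exp (2 / p) := by
        refine prod_le_prod (fun _ _ => by positivity) fun p hp => ?_
        have hp := Nat.prime_of_mem_primeFactors hp
        exact (sigma_one_prime_pow_div_le hp _).trans
          (div_sub_one_le_exp_two_div (by exact_mod_cast hp.two_le))
    _ = Real.exp (∑ p ∈ e.primeFactors, 2 / (p : ℝ)) := (Real.exp_sum ..).symm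
    _ ≤ Real.exp (2 * e.primeFactors.card / e.minFac) :=
        Real.exp_le_exp.2 (sum_primeFactors_two_div_le e)

theorem stmt_3 (e : ℕ) (he : 1 < e) :
    (ArithmeticFunction.sigma 1 e : ℝ) / e ≤
      Real.exp (2 * e.primeFactors.card / e.minFac) :=
  stmt_3_general e
end

section
/- Let n₀ be a positive integer with s(n₀) > 0, and let p, q be distinct primes not dividing n₀. Then s(n₀)·s(n₀·p·q) = (s(n₀)·p + σ(n₀))·(s(n₀)·q + σ(n₀)) + s(n₀)·σ(n₀) − σ(n₀)², as an identity of integers. -/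
/-!
Since `σ₁` is multiplicative, `σ₁(n₀pq) = σ₁(n₀)(p+1)(q+1)`; and the truncated subtraction in `s`
is harmless because `s n` is the sum of the proper divisors of `n`. Over `ℤ` both sides then
become the same polynomial in `σ₁(n₀)`, `n₀`, `p`, `q`.
-/

def s (n : ℕ) : ℕ := ArithmeticFunction.sigma 1 n - n

open ArithmeticFunction

theorem s_eq_sum_properDivisors (n : ℕ) : s n = ∑ d ∈ n.properDivisors, d := by
  rw [s, sigma_one_apply, Nat.sum_divisors_eq_sum_properDivisors_add_self, Nat.add_sub_cancel]

theorem cast_s (n : ℕ) : (s n : ℤ) = sigma 1 n - n := by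
  rw [s_eq_sum_properDivisors, eq_sub_iff_add_eq]
  exact_mod_cast (sigma_one_apply n ▸ Nat.sum_divisors_eq_sum_properDivisors_add_self).symm

theorem sigma_one_apply_prime {p : ℕ} (hp : p.Prime) : sigma 1 p = p + 1 := by
  simpa [Finset.sum_range_succ, add_comm] using sigma_one_apply_prime_pow (i := 1) hp

theorem sigma_one_mul_prime_mul_prime {n p q : ℕ} (hp : p.Prime) (hq : q.Prime) (hpq : p ≠ q)
    (hpn : ¬ p ∣ n) (hqn : ¬ q ∣ n) :
    sigma 1 (n * p * q) = sigma 1 n * (p + 1) * (q + 1) := by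
  have hnp : n.Coprime p := (hp.coprime_iff_not_dvd.mpr hpn).symm
  have hnpq : (n * p).Coprime q :=
    .mul_left (hq.coprime_iff_not_dvd.mpr hqn).symm ((Nat.coprime_primes hp hq).mpr hpq)
  rw [isMultiplicative_sigma.map_mul_of_coprime hnpq, isMultiplicative_sigma.map_mul_of_coprime hnp,
    sigma_one_apply_prime hp, sigma_one_apply_prime hq]

theorem stmt_7_general (n₀ p q : ℕ)
    (hp : p.Prime) (hq : q.Prime) (hpq : p ≠ q)
    (hpn : ¬ p ∣ n₀) (hqn : ¬ q ∣ n₀) :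
    (s n₀ : ℤ) * s (n₀ * p * q)
      = ((s n₀ : ℤ) * p + ArithmeticFunction.sigma 1 n₀)
          * ((s n₀ : ℤ) * q + ArithmeticFunction.sigma 1 n₀)
        + (s n₀ : ℤ) * ArithmeticFunction.sigma 1 n₀
        - (ArithmeticFunction.sigma 1 n₀ : ℤ) ^ 2 := by
  rw [cast_s, cast_s, sigma_one_mul_prime_mul_prime hp hq hpq hpn hqn]
  push_cast
  ring

theorem stmt_7 (n₀ p q : ℕ) (hn₀ : 0 < n₀) (hs : 0 < s n₀)
    (hp : p.Prime) (hq : q.Prime) (hpq : p ≠ q)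
    (hpn : ¬ p ∣ n₀) (hqn : ¬ q ∣ n₀) :
    (s n₀ : ℤ) * s (n₀ * p * q)
      = ((s n₀ : ℤ) * p + ArithmeticFunction.sigma 1 n₀)
          * ((s n₀ : ℤ) * q + ArithmeticFunction.sigma 1 n₀)
        + (s n₀ : ℤ) * ArithmeticFunction.sigma 1 n₀
        - (ArithmeticFunction.sigma 1 n₀ : ℤ) ^ 2 :=
  stmt_7_general n₀ p q hp hq hpq hpn hqn
end

section
/- For any real x ≥ 1 and y ≥ 1, the number of positive integers n ≤ x whose squarefull part exceeds y is O(x/√y), with an absolute implied constant. -/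
/-!
The squarefull part of `n` divides `n` and, like every squarefull number, has the form `a²b³`.
Hence the count is at most `∑_{a²b³ > y} x / (a²b³)`. For fixed `b` the tail
`∑_{a > √(y / b³)} a⁻²` is at most `2 b^{3/2} / √y`, and `∑_b b^{-3/2}` converges.
-/

/-- The squarefull part of `n`: the largest squarefull divisor of `n`. -/
def squarefullPart (n : ℕ) : ℕ :=
  ∏ p ∈ n.primeFactors.filter (fun p => p ^ 2 ∣ n), p ^ n.factorization p

open Finset

theorem Finset.exists_prod_pow_eq_sq_mul_cube {ι M : Type*} [CommMonoid M]
    (s : Finset ι) (f : ι → M) (e : ι → ℕ) (he : ∀ i ∈ s, 2 ≤ e i) :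
    ∃ a b : M, ∏ i ∈ s, f i ^ e i = a ^ 2 * b ^ 3 := by
  classical
  induction s using Finset.induction_on with
  | empty => exact ⟨1, 1, by simp⟩
  | insert i s hi ih =>
    obtain ⟨a, b, hab⟩ := ih fun j hj => he j (mem_insert_of_mem hj)
    obtain ⟨u, v, huv⟩ : ∃ u v, e i = u * 2 + v * 3 :=
      ⟨(e i - 3 * (e i % 2)) / 2, e i % 2, by have := he i (mem_insert_self i s); omega⟩
    refine ⟨f i ^ u * a, f i ^ v * b, ?_⟩
    rw [prod_insert hi, hab, huv, pow_add, pow_mul, pow_mul, mul_pow, mul_pow]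
    exact mul_mul_mul_comm _ _ _ _

theorem squarefullPart_dvd (n : ℕ) : squarefullPart n ∣ n := by
  rcases eq_or_ne n 0 with rfl | hn
  · exact dvd_zero _
  conv_rhs => rw [Nat.prod_primeFactors_pow_factorization hn]
  exact prod_dvd_prod_of_subset _ _ _ (filter_subset _ _)

theorem exists_squarefullPart_eq_sq_mul_cube (n : ℕ) :
    ∃ a b : ℕ, squarefullPart n = a ^ 2 * b ^ 3 := by
  refine exists_prod_pow_eq_sq_mul_cube _ _ _ fun p hp => ?_
  obtain ⟨⟨hp, -, hn⟩, hp2⟩ := mem_filter.mp hp |>.imp_left Nat.mem_primeFactors.mp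
  exact (hp.pow_dvd_iff_le_factorization hn).mp hp2

theorem card_filter_lt_squarefullPart_le (X : ℕ) (y : ℝ) :
    #{n ∈ Icc 1 X | y < squarefullPart n}
      ≤ ∑ q ∈ Icc 1 X ×ˢ Icc 1 X with y < ((q.1 ^ 2 * q.2 ^ 3 : ℕ) : ℝ),
          X / (q.1 ^ 2 * q.2 ^ 3) := by
  classical
  calc #{n ∈ Icc 1 X | y < squarefullPart n}
      ≤ #((Icc 1 X ×ˢ Icc 1 X).filter (fun q => y < ((q.1 ^ 2 * q.2 ^ 3 : ℕ) : ℝ))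
          |>.biUnion fun q => {n ∈ Ioc 0 X | q.1 ^ 2 * q.2 ^ 3 ∣ n}) := by
        refine card_le_card fun n hn => ?_
        obtain ⟨⟨hn1, hnX⟩, hy⟩ := by simpa only [mem_filter, mem_Icc] using hn
        obtain ⟨a, b, hab⟩ := exists_squarefullPart_eq_sq_mul_cube n
        have hdvd : a ^ 2 * b ^ 3 ∣ n := hab ▸ squarefullPart_dvd n
        have ha : a ∣ n := ((dvd_pow_self a two_ne_zero).mul_right _).trans hdvd
        have hb : b ∣ n := ((dvd_pow_self b three_ne_zero).mul_left _).trans hdvd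
        simp only [mem_biUnion, mem_filter, mem_product, mem_Icc, mem_Ioc]
        exact ⟨(a, b), ⟨⟨⟨Nat.pos_of_dvd_of_pos ha hn1, (Nat.le_of_dvd hn1 ha).trans hnX⟩,
          ⟨Nat.pos_of_dvd_of_pos hb hn1, (Nat.le_of_dvd hn1 hb).trans hnX⟩⟩, hab ▸ hy⟩,
          ⟨hn1, hnX⟩, hdvd⟩
    _ ≤ _ := card_biUnion_le.trans_eq <|
        sum_congr rfl fun q _ => Nat.Ioc_filter_dvd_card_eq_div _ _

theorem sum_inv_sq_le_of_lt (s : Finset ℕ) {t : ℝ} (ht : 0 < t) (hs : ∀ a ∈ s, t < a) :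
    ∑ a ∈ s, ((a : ℝ) ^ 2)⁻¹ ≤ 2 / t := by
  have hsub : s ⊆ Ioo ⌊t⌋₊ (s.sup id + 1) := fun a ha =>
    mem_Ioo.mpr ⟨(Nat.floor_lt ht.le).mpr (hs a ha), Nat.lt_succ_of_le (le_sup (f := id) ha)⟩
  calc ∑ a ∈ s, ((a : ℝ) ^ 2)⁻¹
      ≤ ∑ a ∈ Ioo ⌊t⌋₊ (s.sup id + 1), ((a : ℝ) ^ 2)⁻¹ :=
        sum_le_sum_of_subset_of_nonneg hsub fun _ _ _ => by positivity
    _ ≤ 2 / (⌊t⌋₊ + 1) := sum_Ioo_inv_sq_le _ _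
    _ ≤ 2 / t := div_le_div_of_nonneg_left zero_le_two ht (Nat.lt_floor_add_one t).le

theorem sum_filter_inv_sq_mul_cube_le (s : Finset ℕ) {y : ℝ} (hy : 0 < y) (b : ℕ) :
    ∑ a ∈ s with y < (a : ℕ) ^ 2 * (b : ℝ) ^ 3, (a ^ 2 * (b : ℝ) ^ 3 : ℝ)⁻¹
      ≤ 2 / √y * ((b : ℝ) ^ (3 / 2 : ℝ))⁻¹ := by
  rcases b.eq_zero_or_pos with rfl | hb
  · simp -- the filter is empty, and `(0 : ℝ) ^ (3 / 2 : ℝ) = 0` makes the right side `0`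
  set u := (b : ℝ) ^ (3 / 2 : ℝ)
  have hu : 0 < u := by positivity
  have hu2 : u ^ 2 = (b : ℝ) ^ 3 := by
    rw [← Real.rpow_natCast, ← Real.rpow_mul (Nat.cast_nonneg b)]
    norm_num
  have hlt (a : ℕ) (h : y < (a : ℝ) ^ 2 * (b : ℝ) ^ 3) : √y / u < a := by
    rw [div_lt_iff₀ hu, ← Real.sqrt_sq (by positivity : (0 : ℝ) ≤ a * u), mul_pow, hu2]
    exact Real.sqrt_lt_sqrt hy.le h
  calc _ = (∑ a ∈ s with y < (a : ℕ) ^ 2 * (b : ℝ) ^ 3, ((a : ℝ) ^ 2)⁻¹)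
        * (u ^ 2)⁻¹ := by
        simp only [sum_mul, hu2, mul_inv]
    _ ≤ 2 / (√y / u) * (u ^ 2)⁻¹ := by
        gcongr
        exact sum_inv_sq_le_of_lt _ (by positivity) fun a ha => hlt a (mem_filter.mp ha).2
    _ = 2 / √y * u⁻¹ := by field_simp

theorem sum_filter_product_inv_sq_mul_cube_le (s t : Finset ℕ) {y : ℝ} (hy : 0 < y) :
    ∑ q ∈ s ×ˢ t with y < ((q.1 ^ 2 * q.2 ^ 3 : ℕ) : ℝ),
        ((q.1 ^ 2 * q.2 ^ 3 : ℕ) : ℝ)⁻¹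
      ≤ 2 / √y * ∑' b : ℕ, ((b : ℝ) ^ (3 / 2 : ℝ))⁻¹ := by
  have hsum : Summable fun b : ℕ => ((b : ℝ) ^ (3 / 2 : ℝ))⁻¹ :=
    Real.summable_nat_rpow_inv.mpr (by norm_num)
  calc _ = ∑ b ∈ t, ∑ a ∈ s with y < (a : ℕ) ^ 2 * (b : ℝ) ^ 3,
          (a ^ 2 * (b : ℝ) ^ 3 : ℝ)⁻¹ := by
        rw [sum_filter, sum_product_right]
        push_cast
        simp only [sum_filter]
    _ ≤ ∑ b ∈ t, 2 / √y * ((b : ℝ) ^ (3 / 2 : ℝ))⁻¹ :=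
        sum_le_sum fun b _ => sum_filter_inv_sq_mul_cube_le s hy b
    _ ≤ 2 / √y * ∑' b : ℕ, ((b : ℝ) ^ (3 / 2 : ℝ))⁻¹ := by
        rw [← mul_sum]
        gcongr
        exact hsum.sum_le_tsum _ fun b _ => by positivity

theorem stmt_16 :
    ∃ C : ℝ, 0 < C ∧ ∀ x y : ℝ, 1 ≤ x → 1 ≤ y →
      (((Finset.Icc 1 ⌊x⌋₊).filter fun n => (y : ℝ) < squarefullPart n).card : ℝ)
        ≤ C * x / Real.sqrt y := by
  set K := ∑' b : ℕ, ((b : ℝ) ^ (3 / 2 : ℝ))⁻¹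
  have hK : 0 < K :=
    (Real.summable_nat_rpow_inv.mpr (by norm_num)).tsum_pos (fun _ => by positivity) 1 (by simp)
  refine ⟨2 * K, by positivity, fun x y hx hy => ?_⟩
  have hXx : (⌊x⌋₊ : ℝ) ≤ x := Nat.floor_le (by linarith)
  generalize ⌊x⌋₊ = X at hXx ⊢
  calc _ ≤ ∑ q ∈ Icc 1 X ×ˢ Icc 1 X with y < ((q.1 ^ 2 * q.2 ^ 3 : ℕ) : ℝ),
          ((X / (q.1 ^ 2 * q.2 ^ 3) : ℕ) : ℝ) := by
        exact_mod_cast card_filter_lt_squarefullPart_le X y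
    _ ≤ ∑ q ∈ Icc 1 X ×ˢ Icc 1 X with y < ((q.1 ^ 2 * q.2 ^ 3 : ℕ) : ℝ),
          x * ((q.1 ^ 2 * q.2 ^ 3 : ℕ) : ℝ)⁻¹ :=
        sum_le_sum fun q _ => Nat.cast_div_le.trans <| by rw [← div_eq_mul_inv]; gcongr
    _ ≤ x * (2 / √y * K) := by
        rw [← mul_sum]
        gcongr
        exact sum_filter_product_inv_sq_mul_cube_le _ _ (by linarith)
    _ = 2 * K * x / √y := by ring
end
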